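/- For an MDP with transition kernel P and any two policies π and π̄, the total variation distance between the induced state-marginal distributions at time step h satisfies D_TV(ρ^π_h, ρ^π̄_h) ≤ (h+1)·max_s D_TV(π(·|s), π̄(·|s)), where ρ^π_h is the state-action distribution at step h under policy π starting from a common initial distribution. -/

import Mathlib

/-!
Write `d_h` for the state marginal. One step of the chain is the push-forward of the
state-action distribution `d_h(s) π(a|s)` through the Markov kernel `P`, which cannot increase
the `ℓ¹` distance; and passing from `d_h` to `d_h ⊗ π` adds at most `2ε` to it, since
`d π - d̄ π̄ = (d - d̄) π + d̄ (π - π̄)`. Hence the state distance grows by at most `2ε` per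
step, and the state-action distance at step `h` is at most `2(h + 1)ε`.
-/

open Finset

/-- State marginal distribution at step `h` under transition kernel `P`,
policy `π`, and initial distribution `μ`. -/
def stateDist {S A : Type*} [Fintype S] [Fintype A]
    (P : S → A → S → ℝ) (π : S → A → ℝ) (μ : S → ℝ) : ℕ → S → ℝ
  | 0 => μ
  | h + 1 => fun s' => ∑ s, ∑ a, stateDist P π μ h s * π s a * P s a s'

/-- State-action distribution at step `h`. -/
def saDist {S A : Type*} [Fintype S] [Fintype A]
    (P : S → A → S → ℝ) (π : S → A → ℝ) (μ : S → ℝ) (h : ℕ) (s : S) (a : A) : ℝ :=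
  stateDist P π μ h s * π s a

theorem sum_abs_mul_sub_mul_le {S A : Type*} [Fintype S] [Fintype A] {d e : S → ℝ}
    {p q : S → A → ℝ} (hp : ∀ s a, 0 ≤ p s a) (hpsum : ∀ s, ∑ a, p s a = 1)
    (he : ∀ s, 0 ≤ e s) :
    ∑ s, ∑ a, |d s * p s a - e s * q s a| ≤
      ∑ s, |d s - e s| + ∑ s, e s * ∑ a, |p s a - q s a| := by
  rw [← sum_add_distrib]
  refine sum_le_sum fun s _ => ?_
  calc ∑ a, |d s * p s a - e s * q s a|
      ≤ ∑ a, (|d s - e s| * p s a + e s * |p s a - q s a|) := by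
        refine sum_le_sum fun a _ => ?_
        calc |d s * p s a - e s * q s a| = |(d s - e s) * p s a + e s * (p s a - q s a)| := by
              congr 1; ring
          _ ≤ |(d s - e s) * p s a| + |e s * (p s a - q s a)| := abs_add_le _ _
          _ = |d s - e s| * p s a + e s * |p s a - q s a| := by
              rw [abs_mul, abs_mul, abs_of_nonneg (hp s a), abs_of_nonneg (he s)]
    _ = |d s - e s| + e s * ∑ a, |p s a - q s a| := by
        rw [sum_add_distrib, ← mul_sum, ← mul_sum, hpsum, mul_one]

theorem sum_sum_mul_eq_of_sum_eq_one {X Y : Type*} [Fintype X] [Fintype Y] {K : X → Y → ℝ}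
    (hKsum : ∀ x, ∑ y, K x y = 1) (f : X → ℝ) :
    ∑ y, ∑ x, f x * K x y = ∑ x, f x := by
  rw [sum_comm]
  simp only [← mul_sum, hKsum, mul_one]

theorem sum_abs_sum_mul_sub_le {X Y : Type*} [Fintype X] [Fintype Y] {K : X → Y → ℝ}
    (hK : ∀ x y, 0 ≤ K x y) (hKsum : ∀ x, ∑ y, K x y = 1) (f g : X → ℝ) :
    ∑ y, |∑ x, f x * K x y - ∑ x, g x * K x y| ≤ ∑ x, |f x - g x| :=
  calc ∑ y, |∑ x, f x * K x y - ∑ x, g x * K x y|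
      = ∑ y, |∑ x, (f x - g x) * K x y| := by simp only [← sum_sub_distrib, sub_mul]
    _ ≤ ∑ y, ∑ x, |f x - g x| * K x y := by
        refine sum_le_sum fun y _ => (abs_sum_le_sum_abs _ _).trans_eq ?_
        simp only [abs_mul, abs_of_nonneg (hK _ y)]
    _ = ∑ x, |f x - g x| := sum_sum_mul_eq_of_sum_eq_one hKsum _

section MDP

variable {S A : Type*} [Fintype S] [Fintype A] {P : S → A → S → ℝ} {μ : S → ℝ}

theorem stateDist_succ_eq_sum_prod (π : S → A → ℝ) (h : ℕ) (s' : S) :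
    stateDist P π μ (h + 1) s' = ∑ x : S × A, saDist P π μ h x.1 x.2 * P x.1 x.2 s' :=
  (Fintype.sum_prod_type' _).symm

theorem stateDist_nonneg (hP : ∀ s a s', 0 ≤ P s a s') {π : S → A → ℝ}
    (hπ : ∀ s a, 0 ≤ π s a) (hμ : ∀ s, 0 ≤ μ s) (h : ℕ) (s : S) :
    0 ≤ stateDist P π μ h s := by
  induction h generalizing s with
  | zero => exact hμ s
  | succ h ih =>
    exact sum_nonneg fun s _ => sum_nonneg fun a _ =>
      mul_nonneg (mul_nonneg (ih s) (hπ s a)) (hP s a _)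

theorem sum_stateDist (hPsum : ∀ s a, ∑ s', P s a s' = 1) {π : S → A → ℝ}
    (hπsum : ∀ s, ∑ a, π s a = 1) (hμsum : ∑ s, μ s = 1) (h : ℕ) :
    ∑ s, stateDist P π μ h s = 1 := by
  induction h with
  | zero => exact hμsum
  | succ h ih =>
    calc ∑ s', stateDist P π μ (h + 1) s' = ∑ x : S × A, saDist P π μ h x.1 x.2 := by
          simp only [stateDist_succ_eq_sum_prod]
          exact sum_sum_mul_eq_of_sum_eq_one (fun x : S × A => hPsum x.1 x.2) _
      _ = 1 := by
          rw [Fintype.sum_prod_type']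
          simp only [saDist, ← mul_sum, hπsum, mul_one, ih]

variable {π πbar : S → A → ℝ} {δ : ℝ}

theorem sum_abs_saDist_sub_le (hP : ∀ s a s', 0 ≤ P s a s')
    (hPsum : ∀ s a, ∑ s', P s a s' = 1) (hπ : ∀ s a, 0 ≤ π s a)
    (hπsum : ∀ s, ∑ a, π s a = 1) (hπbar : ∀ s a, 0 ≤ πbar s a)
    (hπbarsum : ∀ s, ∑ a, πbar s a = 1) (hμ : ∀ s, 0 ≤ μ s) (hμsum : ∑ s, μ s = 1)
    (hδ : ∀ s, ∑ a, |π s a - πbar s a| ≤ δ) (h : ℕ) :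
    ∑ s, ∑ a, |saDist P π μ h s a - saDist P πbar μ h s a| ≤
      ∑ s, |stateDist P π μ h s - stateDist P πbar μ h s| + δ := by
  have hbar_nonneg := stateDist_nonneg hP hπbar hμ h
  have hpolicy : ∑ s, stateDist P πbar μ h s * ∑ a, |π s a - πbar s a| ≤ δ :=
    calc _ ≤ ∑ s, stateDist P πbar μ h s * δ :=
          sum_le_sum fun s _ => mul_le_mul_of_nonneg_left (hδ s) (hbar_nonneg s)
      _ = δ := by rw [← sum_mul, sum_stateDist hPsum hπbarsum hμsum, one_mul]
  exact (sum_abs_mul_sub_mul_le hπ hπsum hbar_nonneg).trans (by linarith)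

theorem sum_abs_stateDist_sub_le (hP : ∀ s a s', 0 ≤ P s a s')
    (hPsum : ∀ s a, ∑ s', P s a s' = 1) (hπ : ∀ s a, 0 ≤ π s a)
    (hπsum : ∀ s, ∑ a, π s a = 1) (hπbar : ∀ s a, 0 ≤ πbar s a)
    (hπbarsum : ∀ s, ∑ a, πbar s a = 1) (hμ : ∀ s, 0 ≤ μ s) (hμsum : ∑ s, μ s = 1)
    (hδ : ∀ s, ∑ a, |π s a - πbar s a| ≤ δ) (h : ℕ) :
    ∑ s, |stateDist P π μ h s - stateDist P πbar μ h s| ≤ h * δ := by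
  induction h with
  | zero => simp [stateDist]
  | succ h ih =>
    have hpush : ∑ s', |stateDist P π μ (h + 1) s' - stateDist P πbar μ (h + 1) s'| ≤
        ∑ s, ∑ a, |saDist P π μ h s a - saDist P πbar μ h s a| := by
      simp only [stateDist_succ_eq_sum_prod, ← Fintype.sum_prod_type']
      exact sum_abs_sum_mul_sub_le (K := fun x : S × A => P x.1 x.2)
        (fun x => hP x.1 x.2) (fun x => hPsum x.1 x.2) _ _
    have hsa := sum_abs_saDist_sub_le hP hPsum hπ hπsum hπbar hπbarsum hμ hμsum hδ h
    push_cast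
    linarith

end MDP

theorem tv_sa_dist_le {S A : Type*} [Fintype S] [Fintype A]
    (P : S → A → S → ℝ) (π πbar : S → A → ℝ) (μ : S → ℝ) (ε : ℝ)
    (hP : ∀ s a s', 0 ≤ P s a s') (hPsum : ∀ s a, ∑ s', P s a s' = 1)
    (hπ : ∀ s a, 0 ≤ π s a) (hπsum : ∀ s, ∑ a, π s a = 1)
    (hπbar : ∀ s a, 0 ≤ πbar s a) (hπbarsum : ∀ s, ∑ a, πbar s a = 1)
    (hμ : ∀ s, 0 ≤ μ s) (hμsum : ∑ s, μ s = 1)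
    (hε : ∀ s, (1 / 2) * ∑ a, |π s a - πbar s a| ≤ ε) (h : ℕ) :
    (1 / 2) * ∑ s, ∑ a, |saDist P π μ h s a - saDist P πbar μ h s a| ≤ (h + 1) * ε := by
  have hδ : ∀ s, ∑ a, |π s a - πbar s a| ≤ 2 * ε := fun s => by linarith [hε s]
  have hsa := sum_abs_saDist_sub_le hP hPsum hπ hπsum hπbar hπbarsum hμ hμsum hδ h
  have hstate := sum_abs_stateDist_sub_le hP hPsum hπ hπsum hπbar hπbarsum hμ hμsum hδ h
  linarith
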